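/- arXiv:1206.1889 — 7 statements merged into one kernel-verified Lean document; each statement's English description precedes it below -/
import Mathlib

section
/- Let p and q be coprime positive integers. Let f ∈ ℂ⟦x⟧[y] be a nonzero polynomial in y over the formal power series ring in x such that (i) p divides q·j − i for every monomial x^i y^j appearing in f (i.e., f is invariant under the cyclic action ξ·(x,y) = (ξ^{−1}x, ξ^{q}y) of the p-th roots of unity, so f defines a function on X(p;−1,q)), and (ii) x ∤ f. Then there exist g ∈ ℂ⟦x⟧[y] with x ∤ g and a natural number ν divisible by p such that g(x^p, x^q y) = x^ν · f(x,y) in ℂ⟦x⟧[y]. -/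
open Polynomial PowerSeries

/-- The substitution `f(x,y) ↦ f(x^p, x^q y)` on `ℂ⟦x⟧[y]`: writing
`f = Σ a_{ij} x^i y^j`, it is `Σ a_{ij} x^{p·i+q·j} y^j`. The coefficient of `y^j`
is `x^{q·j} · (coeff_j f)(x^p)`. -/
noncomputable def substPQ (p q : ℕ) (f : Polynomial (PowerSeries ℂ)) :
    Polynomial (PowerSeries ℂ) :=
  ∑ j ∈ f.support,
    Polynomial.monomial j
      ((PowerSeries.X : PowerSeries ℂ) ^ (q * j) *
        PowerSeries.mk fun m =>
          if p ∣ m then PowerSeries.coeff (m / p) (f.coeff j) else 0)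

/-!
Let `ν` be the largest value of `q j - i` over the monomials `x^i y^j` of `f`: since `x ∤ f` some
monomial `y^j` occurs, so `ν` is attained and nonnegative, and by the invariance condition
`p ∣ ν`. Every monomial `x^m y^j` of `x^ν f` then has `q j ≤ m` and `p ∣ m - q j`, hence is the
image of `x^((m - q j) / p) y^j` under `(x, y) ↦ (x^p, x^q y)`. Collecting these gives `g`, and
the monomial realising the maximum, `x^(q j) y^j`, comes from the monomial `y^j` of `g`.
-/

namespace PowerSeries

variable {R : Type*} [CommRing R]

theorem expand_eq_mk (p : ℕ) (hp : p ≠ 0) (φ : R⟦X⟧) :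
    expand p hp φ = mk fun m => if p ∣ m then coeff (m / p) φ else 0 := by
  ext m
  rw [coeff_expand, coeff_mk]

theorem X_pow_mul_expand_mk_coeff (p : ℕ) (hp : p ≠ 0) (a : ℕ) (h : R⟦X⟧)
    (hh : ∀ m, coeff m h ≠ 0 → a ≤ m ∧ p ∣ m - a) :
    X ^ a * expand p hp (mk fun n => coeff (a + p * n) h) = h := by
  ext m
  rw [coeff_X_pow_mul']
  by_cases hm : a ≤ m ∧ p ∣ m - a
  · rw [if_pos hm.1, coeff_expand, if_pos hm.2, coeff_mk, Nat.mul_div_cancel' hm.2,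
      Nat.add_sub_cancel' hm.1]
  · have hzero : coeff m h = 0 := by_contra fun hne => hm (hh m hne)
    rw [hzero]
    split_ifs with ham
    · rw [coeff_expand, if_neg fun hdvd => hm ⟨ham, hdvd⟩]
    · rfl

end PowerSeries

theorem exists_max_deficit {R : Type*} [Semiring R] (q : ℕ) (f : R⟦X⟧[X])
    (hx : ∃ j, constantCoeff (f.coeff j) ≠ 0) :
    ∃ ν, (∃ i j, PowerSeries.coeff i (f.coeff j) ≠ 0 ∧ q * j = i + ν) ∧
      ∀ i j, PowerSeries.coeff i (f.coeff j) ≠ 0 → q * j ≤ i + ν := by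
  set S : Set ℕ := {d | ∃ i j, PowerSeries.coeff i (f.coeff j) ≠ 0 ∧ q * j = i + d}
  have hS : S.Nonempty := by
    obtain ⟨j, hj⟩ := hx
    exact ⟨q * j, 0, j, by rwa [coeff_zero_eq_constantCoeff_apply], (zero_add _).symm⟩
  have hbdd : BddAbove S := by
    refine ⟨q * f.natDegree, ?_⟩
    rintro d ⟨i, j, hij, hd⟩
    have hj : j ≤ f.natDegree :=
      le_natDegree_of_ne_zero fun h0 => hij (by rw [h0, map_zero])
    have := Nat.mul_le_mul_left q hj
    omega
  refine ⟨sSup S, Nat.sSup_mem hS hbdd, fun i j hij => ?_⟩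
  rcases le_or_gt (q * j) i with hle | hlt
  · omega
  · have : q * j - i ≤ sSup S := le_csSup hbdd ⟨i, j, hij, by omega⟩
    omega

theorem substPQ_eq_sum (p q : ℕ) (hp : p ≠ 0) (g : ℂ⟦X⟧[X]) {s : Finset ℕ}
    (hs : g.support ⊆ s) :
    substPQ p q g =
      ∑ j ∈ s, Polynomial.monomial j (PowerSeries.X ^ (q * j) * expand p hp (g.coeff j)) := by
  rw [← Finset.sum_subset hs fun j _ hj => by
    rw [notMem_support_iff.1 hj, map_zero, mul_zero, monomial_zero_right]]
  simp_rw [expand_eq_mk]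
  rfl

/-- Inverse of `substPQ` on polynomials whose monomials `x^m y^j` satisfy `q j ≤ m`
and `p ∣ m - q j`. -/
noncomputable def unsubstPQ (p q : ℕ) (h : ℂ⟦X⟧[X]) : ℂ⟦X⟧[X] :=
  ∑ j ∈ h.support, monomial j (mk fun n => PowerSeries.coeff (q * j + p * n) (h.coeff j))

theorem coeff_unsubstPQ (p q : ℕ) (h : ℂ⟦X⟧[X]) (j : ℕ) :
    (unsubstPQ p q h).coeff j = mk fun n => PowerSeries.coeff (q * j + p * n) (h.coeff j) := by
  rw [unsubstPQ, finsetSum_coeff]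
  simp_rw [Polynomial.coeff_monomial]
  rw [Finset.sum_ite_eq']
  split_ifs with hj
  · rfl
  · ext n
    rw [notMem_support_iff.1 hj]
    simp

theorem support_unsubstPQ_subset (p q : ℕ) (h : ℂ⟦X⟧[X]) :
    (unsubstPQ p q h).support ⊆ h.support := by
  intro j hj
  rw [mem_support_iff, coeff_unsubstPQ] at hj
  rw [mem_support_iff]
  rintro h0
  simp only [h0, map_zero] at hj
  exact hj rfl

theorem substPQ_unsubstPQ (p q : ℕ) (hp : p ≠ 0) (h : ℂ⟦X⟧[X])
    (hh : ∀ m j, PowerSeries.coeff m (h.coeff j) ≠ 0 → q * j ≤ m ∧ p ∣ m - q * j) :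
    substPQ p q (unsubstPQ p q h) = h := by
  rw [substPQ_eq_sum p q hp _ (support_unsubstPQ_subset p q h)]
  conv_rhs => rw [h.as_sum_support]
  refine Finset.sum_congr rfl fun j _ => ?_
  rw [coeff_unsubstPQ, X_pow_mul_expand_mk_coeff p hp _ _ fun m hm => hh m j hm]

theorem constantCoeff_coeff_unsubstPQ (p q : ℕ) (h : ℂ⟦X⟧[X]) (j : ℕ) :
    constantCoeff ((unsubstPQ p q h).coeff j) = PowerSeries.coeff (q * j) (h.coeff j) := by
  rw [coeff_unsubstPQ, ← coeff_zero_eq_constantCoeff_apply, coeff_mk, mul_zero, add_zero]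

theorem lemma_descend_blowup_general (p q : ℕ) (hp : 0 < p)
    (f : Polynomial (PowerSeries ℂ))
    (hinv : ∀ i j : ℕ, PowerSeries.coeff i (f.coeff j) ≠ 0 → (p : ℤ) ∣ (q * j - i : ℤ))
    (hx : ∃ j : ℕ, PowerSeries.constantCoeff (f.coeff j) ≠ 0) :
    ∃ (g : Polynomial (PowerSeries ℂ)) (ν : ℕ),
      (∃ j : ℕ, PowerSeries.constantCoeff (g.coeff j) ≠ 0) ∧
      p ∣ ν ∧
      substPQ p q g = Polynomial.C ((PowerSeries.X : PowerSeries ℂ) ^ ν) * f := by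
  obtain ⟨ν, ⟨i₀, j₀, hi₀, hν⟩, hbound⟩ := exists_max_deficit q f hx
  have hpν : (p : ℤ) ∣ ν := by
    simpa [show (q * j₀ - i₀ : ℤ) = ν by omega] using hinv i₀ j₀ hi₀
  set h := Polynomial.C (PowerSeries.X ^ ν) * f
  have hcoeff : ∀ m j, PowerSeries.coeff m (h.coeff j) =
      if ν ≤ m then PowerSeries.coeff (m - ν) (f.coeff j) else 0 := fun m j => by
    rw [Polynomial.coeff_C_mul, PowerSeries.coeff_X_pow_mul']
  have hmonomials : ∀ m j, PowerSeries.coeff m (h.coeff j) ≠ 0 →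
      q * j ≤ m ∧ p ∣ m - q * j := by
    intro m j hm
    rw [hcoeff] at hm
    split_ifs at hm with hνm
    · have hle := hbound _ _ hm
      refine ⟨by omega, ?_⟩
      rw [← Int.natCast_dvd_natCast, Nat.cast_sub (by omega)]
      have hsplit : (m - q * j : ℤ) = ν - (q * j - (m - ν : ℕ) : ℤ) := by
        push_cast [Nat.cast_sub hνm]; ring
      exact hsplit ▸ dvd_sub hpν (hinv _ _ hm)
    · exact (hm rfl).elim
  refine ⟨unsubstPQ p q h, ν, ⟨j₀, ?_⟩, Int.natCast_dvd_natCast.1 hpν,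
    substPQ_unsubstPQ p q hp.ne' h hmonomials⟩
  rwa [constantCoeff_coeff_unsubstPQ, hcoeff, if_pos (by omega), hν, Nat.add_sub_cancel]

/-- Lemma 4.9 (formal power series version): if `f ∈ ℂ⟦x⟧[y]` is nonzero, invariant under the
action of the `p`-th roots of unity on `X(p;−1,q)` (i.e. `p ∣ q·j − i` for every monomial
`x^i y^j` appearing in `f`), and `x ∤ f`, then there exist `g ∈ ℂ⟦x⟧[y]` with `x ∤ g` and
`ν ∈ ℕ` with `p ∣ ν` such that `g(x^p, x^q y) = x^ν · f(x,y)`. -/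
theorem lemma_descend_blowup (p q : ℕ) (hp : 0 < p) (hq : 0 < q) (hpq : Nat.Coprime p q)
    (f : Polynomial (PowerSeries ℂ)) (hf0 : f ≠ 0)
    (hinv : ∀ i j : ℕ, PowerSeries.coeff i (f.coeff j) ≠ 0 → (p : ℤ) ∣ (q * j - i : ℤ))
    (hx : ∃ j : ℕ, PowerSeries.constantCoeff (f.coeff j) ≠ 0) :
    ∃ (g : Polynomial (PowerSeries ℂ)) (ν : ℕ),
      (∃ j : ℕ, PowerSeries.constantCoeff (g.coeff j) ≠ 0) ∧
      p ∣ ν ∧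
      substPQ p q g = Polynomial.C ((PowerSeries.X : PowerSeries ℂ) ^ ν) * f :=
  lemma_descend_blowup_general p q hp f hinv hx
end

section
/- Let p and q be coprime positive integers and let n be a natural number. Then the number of pairs (i,j) of natural numbers with p·i + q·j < p·q·n equals p·q·n·(n+1)/2 − (p−1)·(q−1)·n/2; equivalently, 2 · #{(i,j) ∈ ℕ² : p·i + q·j < p·q·n} = p·q·n·(n+1) − (p−1)·(q−1)·n. -/
open Finset

private lemma pairId {p q : ℕ} (hpq : Nat.Coprime p q) {i : ℕ}
    (h1 : 0 < i) (h2 : i < q) : p * i / q + p * (q - i) / q + 1 = p := by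
  have hq : 0 < q := lt_trans h1 h2
  have hnd : ¬ q ∣ p * i := by
    intro hdvd
    have hdi : q ∣ i := (Nat.Coprime.symm hpq).dvd_of_dvd_mul_left hdvd
    have := Nat.le_of_dvd h1 hdi
    omega
  have e1 := Nat.div_add_mod (p * i) q
  have e2 := Nat.div_add_mod (p * (q - i)) q
  have hsum : p * i + p * (q - i) = p * q := by
    rw [← Nat.mul_add, Nat.add_sub_cancel' (le_of_lt h2)]
  have hr1 : 0 < p * i % q := by
    rcases Nat.eq_zero_or_pos (p * i % q) with h | h
    · exact absurd (Nat.dvd_of_mod_eq_zero h) hnd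
    · exact h
  have hr2 : 0 < p * (q - i) % q := by
    rcases Nat.eq_zero_or_pos (p * (q - i) % q) with h | h
    · exfalso
      have hdvd : q ∣ p * (q - i) := Nat.dvd_of_mod_eq_zero h
      have hpq' : q ∣ p * i + p * (q - i) := by rw [hsum]; exact Dvd.intro_left p rfl
      have : q ∣ p * i := by
        have := Nat.dvd_sub hpq' hdvd
        rwa [Nat.add_sub_cancel] at this
      exact hnd this
    · exact h
  have hm1 : p * i % q < q := Nat.mod_lt _ hq
  have hm2 : p * (q - i) % q < q := Nat.mod_lt _ hq
  set d1 := p * i / q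
  set d2 := p * (q - i) / q
  have key : q * (d1 + d2) + (p * i % q + p * (q - i) % q) = q * p := by
    have : (q * d1 + p * i % q) + (q * d2 + p * (q - i) % q) = p * q := by
      rw [e1, e2, hsum]
    linarith [this]
  have h5 : d1 + d2 < p := by
    have : q * (d1 + d2) < q * p := by omega
    exact Nat.lt_of_mul_lt_mul_left this
  have h6 : p < d1 + d2 + 2 := by
    have : q * p < q * (d1 + d2 + 2) := by
      have : q * (d1 + d2 + 2) = q * (d1 + d2) + q + q := by ring
      omega
    exact Nat.lt_of_mul_lt_mul_left this
  omega

private lemma sumT {p q : ℕ} (hq : 0 < q) (hpq : Nat.Coprime p q) :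
    2 * (∑ i ∈ range q, p * i / q) + p + q = p * q + 1 := by
  obtain ⟨b, rfl⟩ : ∃ b, q = b + 1 := ⟨q - 1, by omega⟩
  rw [Finset.sum_range_succ']
  simp only [Nat.mul_zero, Nat.zero_div, add_zero]
  have hrefl : ∑ i ∈ range b, p * (i + 1) / (b + 1)
      = ∑ i ∈ range b, p * ((b + 1) - (i + 1)) / (b + 1) := by
    rw [← Finset.sum_range_reflect (fun i => p * ((b + 1) - (i + 1)) / (b + 1)) b]
    apply Finset.sum_congr rfl
    intro i hi
    simp only [mem_range] at hi
    congr 2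
    omega
  have key : ∑ i ∈ range b, (p * (i + 1) / (b + 1) + p * ((b + 1) - (i + 1)) / (b + 1) + 1)
      = ∑ _i ∈ range b, p := by
    apply Finset.sum_congr rfl
    intro i hi
    simp only [mem_range] at hi
    exact pairId hpq (by omega) (by omega)
  rw [Finset.sum_const, smul_eq_mul] at key
  rw [Finset.sum_add_distrib, Finset.sum_add_distrib, ← hrefl, Finset.sum_const,
    smul_eq_mul, mul_one, card_range] at key
  -- key : T' + T' + b = b * p
  nlinarith [key]

private lemma sumU {p q : ℕ} (hq : 0 < q) (hpq : Nat.Coprime p q) (n : ℕ) :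
    2 * (∑ i ∈ range (q * n), p * i / q) + n * p + n * q = p * q * n * n + n := by
  induction n with
  | zero => simp
  | succ m ih =>
    have hqm : q * (m + 1) = q * m + q := by ring
    rw [hqm, Finset.sum_range_add]
    have inner : ∀ i, p * (q * m + i) / q = p * m + p * i / q := by
      intro i
      have : p * (q * m + i) = q * (p * m) + p * i := by ring
      rw [this, Nat.mul_add_div hq]
    rw [Finset.sum_congr rfl (fun i _ => inner i), Finset.sum_add_distrib,
      Finset.sum_const, card_range, smul_eq_mul]
    have hT := sumT hq hpq
    nlinarith [ih, hT]

private lemma fiber {p q n i : ℕ} (hq : 0 < q) :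
    ((range (p * n)).filter fun j => p * i + q * j < p * q * n)
      = range (p * n - p * i / q) := by
  ext b
  simp only [mem_filter, mem_range]
  constructor
  · rintro ⟨hb, hlt⟩
    have h1 : q * (p * i / q) ≤ p * i := Nat.mul_div_le _ _
    have h3 : q * (p * i / q + b) < q * (p * n) := by
      calc q * (p * i / q + b) = q * (p * i / q) + q * b := by ring
        _ ≤ p * i + q * b := by omega
        _ < p * q * n := hlt
        _ = q * (p * n) := by ring
    have := Nat.lt_of_mul_lt_mul_left h3
    omega
  · intro hb
    obtain ⟨d, hd⟩ : ∃ d, d = p * i / q := ⟨_, rfl⟩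
    rw [← hd] at hb
    have hdle : b + d + 1 ≤ p * n := by omega
    refine ⟨by omega, ?_⟩
    have h4 : p * i < q * (d + 1) := by
      have hmod : p * i % q < q := Nat.mod_lt _ hq
      calc p * i = q * d + p * i % q := by rw [hd]; exact (Nat.div_add_mod _ _).symm
        _ < q * d + q := Nat.add_lt_add_left hmod _
        _ = q * (d + 1) := by ring
    calc p * i + q * b < q * (d + 1) + q * b := Nat.add_lt_add_right h4 _
      _ = q * (d + 1 + b) := by ring
      _ ≤ q * (p * n) := Nat.mul_le_mul_left q (by omega)
      _ = p * q * n := by ring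

/-- The lattice-point count behind the formula
`dim_ℂ ℂ{x,y}/I_{p,q}^n = pq·n(n+1)/2 − (p−1)(q−1)·n/2`:
for coprime positive integers `p, q` and `n ∈ ℕ`, the number of pairs `(i,j) ∈ ℕ²` with
`p·i + q·j < p·q·n` satisfies `2·# = p·q·n·(n+1) − (p−1)·(q−1)·n`. -/
theorem lattice_count_pq (p q n : ℕ) (hp : 0 < p) (hq : 0 < q) (hpq : Nat.Coprime p q) :
    (2 * Nat.card {x : ℕ × ℕ // p * x.1 + q * x.2 < p * q * n} : ℤ) =
      (p : ℤ) * q * n * (n + 1) - ((p : ℤ) - 1) * ((q : ℤ) - 1) * n := by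
  classical
  set S : Finset (ℕ × ℕ) :=
    (range (q * n) ×ˢ range (p * n)).filter (fun x => p * x.1 + q * x.2 < p * q * n) with hS
  have hmemS : ∀ x : ℕ × ℕ, x ∈ S ↔ p * x.1 + q * x.2 < p * q * n := by
    intro x
    simp only [hS, mem_filter, mem_product, mem_range]
    constructor
    · exact fun h => h.2
    · intro h
      refine ⟨⟨?_, ?_⟩, h⟩
      · have h1 : p * x.1 < p * (q * n) := by
          calc p * x.1 ≤ p * x.1 + q * x.2 := Nat.le_add_right _ _
            _ < p * q * n := h
            _ = p * (q * n) := by ring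
        exact Nat.lt_of_mul_lt_mul_left h1
      · have h1 : q * x.2 < q * (p * n) := by
          calc q * x.2 ≤ p * x.1 + q * x.2 := Nat.le_add_left _ _
            _ < p * q * n := h
            _ = q * (p * n) := by ring
        exact Nat.lt_of_mul_lt_mul_left h1
  have hcard : Nat.card {x : ℕ × ℕ // p * x.1 + q * x.2 < p * q * n} = S.card := by
    have hset : {x : ℕ × ℕ | p * x.1 + q * x.2 < p * q * n} = ↑S := by
      ext x
      simp only [Set.mem_setOf_eq, Finset.coe_filter, hmemS, Finset.mem_coe]
    calc Nat.card {x : ℕ × ℕ // p * x.1 + q * x.2 < p * q * n}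
        = Nat.card ({x : ℕ × ℕ | p * x.1 + q * x.2 < p * q * n} : Set (ℕ × ℕ)) := rfl
      _ = S.card := by
          rw [hset, Nat.card_coe_set_eq, Set.ncard_coe_finset]
  have hcard2 : S.card = ∑ i ∈ range (q * n), (p * n - p * i / q) := by
    rw [Finset.card_eq_sum_card_fiberwise (f := Prod.fst) (t := range (q * n))
      (fun x hx => by
        have h' := (mem_filter.mp hx).1
        simp only [mem_product, mem_range] at h'
        exact mem_range.mpr h'.1)]
    apply Finset.sum_congr rfl
    intro i hi
    have himg : S.filter (fun x => x.1 = i)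
        = (range (p * n - p * i / q)).image (fun j => (i, j)) := by
      ext x
      obtain ⟨a, b⟩ := x
      simp only [mem_filter, mem_image, mem_range]
      constructor
      · rintro ⟨haS, rfl⟩
        refine ⟨b, ?_, rfl⟩
        have hb : b ∈ (range (p * n)).filter fun j => p * a + q * j < p * q * n := by
          simp only [mem_filter, mem_range]
          have := (hmemS (a, b)).mp haS
          have hbpn : a ∈ range (q * n) ∧ b ∈ range (p * n) := by
            have := mem_product.mp (mem_filter.mp haS).1
            simpa using this
          exact ⟨by simpa using hbpn.2, this⟩
        rw [fiber hq] at hb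
        simpa using hb
      · rintro ⟨j, hj, hjeq⟩
        have hmem : j ∈ range (p * n - p * i / q) := mem_range.mpr hj
        rw [← fiber (p := p) (n := n) (i := i) hq] at hmem
        simp only [mem_filter, mem_range] at hmem
        constructor
        · rw [← hjeq]; exact (hmemS (i, j)).mpr hmem.2
        · exact (Prod.ext_iff.mp hjeq).1.symm
    rw [himg, Finset.card_image_of_injective _ (fun j k h => by
      simpa using h), card_range]
  have hle : ∀ i ∈ range (q * n), p * i / q ≤ p * n := by
    intro i hi
    simp only [mem_range] at hi
    have h1 : p * i ≤ q * (p * n) := by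
      calc p * i ≤ p * (q * n) := Nat.mul_le_mul_left p (le_of_lt hi)
        _ = q * (p * n) := by ring
    calc p * i / q ≤ q * (p * n) / q := Nat.div_le_div_right h1
      _ = p * n := Nat.mul_div_cancel_left _ hq
  have hsplit : (∑ i ∈ range (q * n), (p * n - p * i / q)) + (∑ i ∈ range (q * n), p * i / q)
      = q * n * (p * n) := by
    rw [← Finset.sum_add_distrib]
    rw [Finset.sum_congr rfl (fun i hi => Nat.sub_add_cancel (hle i hi))]
    rw [Finset.sum_const, card_range, smul_eq_mul]
  have hU := sumU hq hpq n
  rw [hcard, hcard2]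
  have h1 : ((∑ i ∈ range (q * n), (p * n - p * i / q) : ℕ) : ℤ)
      + ((∑ i ∈ range (q * n), p * i / q : ℕ) : ℤ) = (q : ℤ) * n * ((p : ℤ) * n) := by
    exact_mod_cast hsplit
  have h2 : 2 * ((∑ i ∈ range (q * n), p * i / q : ℕ) : ℤ) + (n : ℤ) * p + (n : ℤ) * q
      = (p : ℤ) * q * n * n + n := by
    exact_mod_cast hU
  linear_combination 2 * h1 - h2
end

section
/- Let p and q be coprime positive integers and n a natural number. Let J_{p,q,n} ⊆ ℂ⟦x,y⟧ be the ideal generated by the monomials x^i y^j with p·i + q·j ≥ p·q·n. Then the quotient ℂ⟦x,y⟧/J_{p,q,n} is a finite-dimensional ℂ-vector space and 2 · dim_ℂ (ℂ⟦x,y⟧/J_{p,q,n}) = p·q·n·(n+1) − (p−1)·(q−1)·n, i.e., dim_ℂ (ℂ⟦x,y⟧/J_{p,q,n}) = pq·n(n+1)/2 − (p−1)(q−1)·n/2. -/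
/-- The ideal `J_{p,q,n}` of `ℂ⟦x,y⟧` generated by the monomials `x^i y^j` with
`p·i + q·j ≥ p·q·n`; this is the `n`-th power of the integral closure `I_{p,q}`
of `⟨x^q, y^p⟩`. -/
noncomputable def Jpqn (p q n : ℕ) : Ideal (MvPowerSeries (Fin 2) ℂ) :=
  Ideal.span {F | ∃ i j : ℕ, p * q * n ≤ p * i + q * j ∧
    F = (MvPowerSeries.X 0 : MvPowerSeries (Fin 2) ℂ) ^ i * (MvPowerSeries.X 1) ^ j}

/-!
`J_{p,q,n}` is a monomial ideal of `ℂ⟦x,y⟧`, and a power series lies in it exactly when its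
coefficients vanish at the lattice points strictly below the line `p i + q j = p q n`; only the
finitely many generators in the box `[0, q n] × [0, p n]` are needed for this. So the quotient is
the space of functions on those points. To count them, note that the point reflection of the box
exchanges the points below and above the line, and by coprimality the points on the line are
exactly the `n + 1` points `(q t, p (n - t))`; hence `2 · #below + n + 1 = (q n + 1)(p n + 1)`.
-/

open Finset MvPowerSeries

namespace MvPowerSeries

variable {σ R : Type*} [CommSemiring R]

theorem monomial_one_dvd_of_coeff_ne_zero {e : σ →₀ ℕ} {F : MvPowerSeries σ R}
    (hF : ∀ d, coeff d F ≠ 0 → e ≤ d) : monomial e 1 ∣ F := by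
  let G : MvPowerSeries σ R := fun d => coeff (d + e) F
  refine ⟨G, ext fun d => ?_⟩
  rw [coeff_monomial_mul, one_mul]
  split_ifs with hed
  · exact congrArg (coeff · F) (tsub_add_cancel_of_le hed).symm
  · exact not_ne_iff.1 (mt (hF d) hed)

theorem exists_le_of_mem_span_monomial {E : Set (σ →₀ ℕ)} {F : MvPowerSeries σ R}
    (hF : F ∈ Ideal.span ((monomial · (1 : R)) '' E)) {d : σ →₀ ℕ}
    (hd : coeff d F ≠ 0) : ∃ e ∈ E, e ≤ d := by
  classical
  induction hF using Submodule.span_induction generalizing d with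
  | mem x hx =>
    obtain ⟨e, he, rfl⟩ := hx
    exact ⟨e, he, (eq_of_coeff_monomial_ne_zero hd).ge⟩
  | zero => simp at hd
  | add x y _ _ hx hy =>
    rw [map_add] at hd
    by_cases hxd : coeff d x = 0
    · exact hy (by simpa [hxd] using hd)
    · exact hx hxd
  | smul a x _ hx =>
    rw [smul_eq_mul, coeff_mul] at hd
    obtain ⟨uv, huv, h⟩ := Finset.exists_ne_zero_of_sum_ne_zero hd
    obtain ⟨e, he, hle⟩ := hx (right_ne_zero_of_mul h)
    exact ⟨e, he, hle.trans (mem_antidiagonal.1 huv ▸ le_add_self)⟩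

theorem mem_span_monomial_of_coeff_ne_zero (E : Finset (σ →₀ ℕ)) {F : MvPowerSeries σ R}
    (hF : ∀ d, coeff d F ≠ 0 → ∃ e ∈ E, e ≤ d) :
    F ∈ Ideal.span ((monomial · (1 : R)) '' E) := by
  classical
  induction E using Finset.induction_on generalizing F with
  | empty =>
    have : F = 0 := ext fun d => by_contra fun h => by simpa using hF d h
    simp [this]
  | insert e E _ ih =>
    let G : MvPowerSeries σ R := fun d => if e ≤ d then coeff d F else 0
    let H : MvPowerSeries σ R := fun d => if e ≤ d then 0 else coeff d F
    have hG d : coeff d G = if e ≤ d then coeff d F else 0 := rfl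
    have hH d : coeff d H = if e ≤ d then 0 else coeff d F := rfl
    have hFGH : F = G + H := ext fun d => by
      rw [map_add, hG, hH]; split_ifs <;> simp
    rw [hFGH]
    refine add_mem ?_ (Ideal.span_mono (Set.image_mono (by simp)) (ih fun d hd => ?_))
    · obtain ⟨K, hK⟩ := monomial_one_dvd_of_coeff_ne_zero (e := e) (F := G) fun d hd =>
        by_contra fun h => hd (by rw [hG, if_neg h])
      rw [hK]
      exact Ideal.mul_mem_right _ _ (Ideal.subset_span ⟨e, by simp, rfl⟩)
    · have h : ¬e ≤ d := fun h => hd (by rw [hH, if_pos h])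
      rw [hH, if_neg h] at hd
      obtain ⟨e', he', hle⟩ := hF d hd
      exact ⟨e', (mem_insert.1 he').resolve_left (by rintro rfl; exact h hle), hle⟩

variable {k : Type*} [Field k]

noncomputable def quotientEquivPiOfMemIff (I : Ideal (MvPowerSeries σ k))
    (T : Finset (σ →₀ ℕ)) (hI : ∀ F, F ∈ I ↔ ∀ d ∈ T, coeff d F = 0) :
    (MvPowerSeries σ k ⧸ I) ≃ₗ[k] (T → k) :=
  let φ : MvPowerSeries σ k →ₗ[k] (T → k) := LinearMap.pi fun d => coeff d.1
  have hker : LinearMap.ker φ = I.restrictScalars k := by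
    ext F
    simp [φ, hI, funext_iff]
  have hsurj : Function.Surjective φ := fun g => by
    classical
    let F : MvPowerSeries σ k := fun d => if h : d ∈ T then g ⟨d, h⟩ else 0
    have hF (d : T) : coeff d.1 F = g d := dif_pos d.2
    exact ⟨F, funext fun d => hF d⟩
  (Submodule.Quotient.restrictScalarsEquiv k I).symm ≪≫ₗ
    Submodule.quotEquivOfEq _ _ hker.symm ≪≫ₗ φ.quotKerEquivOfSurjective hsurj

end MvPowerSeries

namespace Jpqn

variable {p q n : ℕ}

theorem eq_span_monomial :
    Jpqn p q n =
      Ideal.span ((monomial · 1) '' {e : Fin 2 →₀ ℕ | p * q * n ≤ p * e 0 + q * e 1}) := by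
  have hX (i j : ℕ) : (X 0 : MvPowerSeries (Fin 2) ℂ) ^ i * X 1 ^ j =
      monomial (Finsupp.single 0 i + Finsupp.single 1 j) 1 := by
    rw [X_pow_eq, X_pow_eq, monomial_mul_monomial, one_mul]
  have he (e : Fin 2 →₀ ℕ) : Finsupp.single 0 (e 0) + Finsupp.single 1 (e 1) = e := by
    ext a; fin_cases a <;> simp
  unfold Jpqn
  congr 1
  ext F
  constructor
  · rintro ⟨i, j, hij, rfl⟩
    exact ⟨Finsupp.single 0 i + Finsupp.single 1 j, by simpa using hij, (hX i j).symm⟩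
  · rintro ⟨e, he', rfl⟩
    exact ⟨e 0, e 1, he', by rw [hX, he]⟩

theorem mem_iff {F : MvPowerSeries (Fin 2) ℂ} :
    F ∈ Jpqn p q n ↔
      ∀ d : Fin 2 →₀ ℕ, p * d 0 + q * d 1 < p * q * n → coeff d F = 0 := by
  rw [eq_span_monomial]
  constructor
  · intro hF d hd
    by_contra hne
    obtain ⟨e, he, hle⟩ := exists_le_of_mem_span_monomial hF hne
    have h0 := Nat.mul_le_mul_left p (hle 0)
    have h1 := Nat.mul_le_mul_left q (hle 1)
    simp only [Set.mem_ofPred_eq] at he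
    omega
  · intro hF
    -- above the line, `d` dominates its truncation to the box `[0, q n] × [0, p n]`
    let b : Fin 2 →₀ ℕ := Finsupp.single 0 (q * n) + Finsupp.single 1 (p * n)
    refine Ideal.span_mono (Set.image_mono ?_)
      (mem_span_monomial_of_coeff_ne_zero
        ((Iic b).filter fun e => p * q * n ≤ p * e 0 + q * e 1)
        fun d hd => ⟨d ⊓ b, ?_, inf_le_left⟩)
    · exact fun e he => (mem_filter.1 he).2
    · have habove := not_lt.1 (mt (hF d) hd)
      refine mem_filter.2 ⟨mem_Iic.2 inf_le_right, ?_⟩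
      have hb0 : b 0 = q * n := by simp [b]
      have hb1 : b 1 = p * n := by simp [b]
      rw [Finsupp.inf_apply, Finsupp.inf_apply, hb0, hb1, min_def, min_def]
      split_ifs <;> nlinarith

def box (p q n : ℕ) : Finset (ℕ × ℕ) := Iic (q * n) ×ˢ Iic (p * n)

def belowLine (p q n : ℕ) : Finset (ℕ × ℕ) :=
  (box p q n).filter fun x => p * x.1 + q * x.2 < p * q * n

theorem mem_belowLine {x : ℕ × ℕ} :
    x ∈ belowLine p q n ↔ p * x.1 + q * x.2 < p * q * n := by
  refine ⟨fun h => (mem_filter.1 h).2, fun h => mem_filter.2 ⟨?_, h⟩⟩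
  have h1 : p * x.1 < p * (q * n) := by rw [← mul_assoc]; omega
  have h2 : q * x.2 < q * (p * n) := by rw [mul_left_comm, ← mul_assoc]; omega
  simp only [box, mem_product, mem_Iic]
  exact ⟨(Nat.lt_of_mul_lt_mul_left h1).le, (Nat.lt_of_mul_lt_mul_left h2).le⟩

theorem card_box : #(box p q n) = (q * n + 1) * (p * n + 1) := by
  simp [box]

theorem card_box_eq_add :
    #(box p q n) = #(belowLine p q n)
      + #((box p q n).filter fun x => p * x.1 + q * x.2 = p * q * n)
      + #((box p q n).filter fun x => p * q * n < p * x.1 + q * x.2) := by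
  rw [belowLine, ← card_union_of_disjoint (disjoint_filter.2 fun _ _ h => h.ne), ← filter_or,
    ← card_union_of_disjoint (disjoint_filter.2 fun _ _ h => not_lt.2 (h.elim le_of_lt le_of_eq)),
    ← filter_or]
  exact congrArg card (filter_true_of_mem fun _ _ => or_assoc.2 (lt_trichotomy _ _)).symm

theorem reflect_add {i j : ℕ} (hi : i ≤ q * n) (hj : j ≤ p * n) :
    p * (q * n - i) + q * (p * n - j) + (p * i + q * j) = 2 * (p * q * n) := by
  zify [hi, hj]; ring

theorem card_aboveLine :
    #((box p q n).filter fun x => p * q * n < p * x.1 + q * x.2) = #(belowLine p q n) := by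
  refine card_nbij' (fun x => (q * n - x.1, p * n - x.2)) (fun x => (q * n - x.1, p * n - x.2))
    ?_ ?_ ?_ ?_ <;> rintro ⟨i, j⟩ hx <;>
    simp only [belowLine, box, coe_filter, mem_product, mem_Iic, Set.mem_ofPred_eq] at hx ⊢
  · exact ⟨⟨Nat.sub_le _ _, Nat.sub_le _ _⟩, by linarith [reflect_add hx.1.1 hx.1.2]⟩
  · exact ⟨⟨Nat.sub_le _ _, Nat.sub_le _ _⟩, by linarith [reflect_add hx.1.1 hx.1.2]⟩
  · simp [Nat.sub_sub_self hx.1.1, Nat.sub_sub_self hx.1.2]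
  · simp [Nat.sub_sub_self hx.1.1, Nat.sub_sub_self hx.1.2]

theorem onLine_eq_image (hq : 0 < q) (hpq : p.Coprime q) :
    (box p q n).filter (fun x => p * x.1 + q * x.2 = p * q * n) =
      (range (n + 1)).image fun t => (q * t, p * (n - t)) := by
  ext ⟨i, j⟩
  simp only [box, mem_filter, mem_product, mem_Iic, mem_range, mem_image, Prod.mk.injEq]
  constructor
  · rintro ⟨⟨hi, hj⟩, hline⟩
    have hqi : q ∣ i * p := by
      rw [mul_comm, ← Nat.dvd_add_left (dvd_mul_right q j), hline, mul_right_comm]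
      exact Nat.dvd_mul_left q (p * n)
    obtain ⟨t, rfl⟩ := hpq.symm.dvd_of_dvd_mul_right hqi
    have htn : t ≤ n := Nat.le_of_mul_le_mul_left hi hq
    refine ⟨t, by omega, rfl, Nat.eq_of_mul_eq_mul_left hq ?_⟩
    zify [htn] at hline ⊢
    linear_combination -hline
  · rintro ⟨t, ht, rfl, rfl⟩
    refine ⟨⟨Nat.mul_le_mul_left q (by omega), Nat.mul_le_mul_left p (by omega)⟩, ?_⟩
    zify [(by omega : t ≤ n)]
    ring

theorem two_mul_card_belowLine (hq : 0 < q) (hpq : p.Coprime q) :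
    (2 * #(belowLine p q n) : ℤ) = p * q * n * (n + 1) - (p - 1) * (q - 1) * n := by
  have h := card_box_eq_add (p := p) (q := q) (n := n)
  rw [card_box, card_aboveLine, onLine_eq_image hq hpq,
    card_image_of_injective _ fun a b h => Nat.eq_of_mul_eq_mul_left hq (congrArg Prod.fst h),
    card_range] at h
  have hZ := congrArg (Nat.cast : ℕ → ℤ) h
  push_cast at hZ
  linear_combination -hZ

noncomputable def exponentEquiv : (Fin 2 →₀ ℕ) ≃ ℕ × ℕ :=
  Finsupp.equivFunOnFinite.trans (piFinTwoEquiv fun _ => ℕ)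

end Jpqn

theorem dim_quotient_Jpqn_general (p q n : ℕ) (hq : 0 < q) (hpq : Nat.Coprime p q) :
    FiniteDimensional ℂ (MvPowerSeries (Fin 2) ℂ ⧸ Jpqn p q n) ∧
    (2 * Module.finrank ℂ (MvPowerSeries (Fin 2) ℂ ⧸ Jpqn p q n) : ℤ) =
      (p : ℤ) * q * n * (n + 1) - ((p : ℤ) - 1) * ((q : ℤ) - 1) * n := by
  let T : Finset (Fin 2 →₀ ℕ) :=
    (Jpqn.belowLine p q n).map Jpqn.exponentEquiv.symm.toEmbedding
  have hT (F : MvPowerSeries (Fin 2) ℂ) : F ∈ Jpqn p q n ↔ ∀ d ∈ T, coeff d F = 0 := by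
    simp only [Jpqn.mem_iff, T, mem_map_equiv, Equiv.symm_symm, Jpqn.mem_belowLine]
    rfl
  let e := quotientEquivPiOfMemIff (Jpqn p q n) T hT
  refine ⟨Module.Finite.equiv e.symm, ?_⟩
  rw [e.finrank_eq, Module.finrank_fintype_fun_eq_card, Fintype.card_coe, card_map]
  exact Jpqn.two_mul_card_belowLine hq hpq

/-- `ℂ⟦x,y⟧ / J_{p,q,n}` is a finite-dimensional `ℂ`-vector space and
`2 · dim_ℂ (ℂ⟦x,y⟧/J_{p,q,n}) = p·q·n·(n+1) − (p−1)·(q−1)·n`. -/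
theorem dim_quotient_Jpqn (p q n : ℕ) (hp : 0 < p) (hq : 0 < q) (hpq : Nat.Coprime p q) :
    FiniteDimensional ℂ (MvPowerSeries (Fin 2) ℂ ⧸ Jpqn p q n) ∧
    (2 * Module.finrank ℂ (MvPowerSeries (Fin 2) ℂ ⧸ Jpqn p q n) : ℤ) =
      (p : ℤ) * q * n * (n + 1) - ((p : ℤ) - 1) * ((q : ℤ) - 1) * n :=
  dim_quotient_Jpqn_general p q n hq hpq
end

section
/- Let p and q be coprime positive integers. Let S ⊆ ℂ⟦t⟧ be the ℂ-subspace of formal power series f such that the coefficient of t^m in f vanishes for every m not of the form a·p + b·q with a, b ∈ ℕ (S is the subalgebra ℂ⟦t^p, t^q⟧, the image of ℂ⟦u,v⟧ under u ↦ t^p, v ↦ t^q; it is the local ring of the curve x^p = y^q and ℂ⟦t⟧ is its normalization). Then the quotient ℂ-vector space ℂ⟦t⟧/S is finite dimensional and 2 · dim_ℂ (ℂ⟦t⟧/S) = (p−1)·(q−1). -/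
/-! The quotient `ℂ⟦t⟧ / S` is the coordinate space on the gaps of the numerical semigroup
`⟨p, q⟩`, all of which lie below the conductor `c = (p - 1)(q - 1)`. The reflection
`m ↦ c - 1 - m` exchanges gaps and semigroup elements in `[0, c)`: a gap `m` is completed to
`c - 1` by an element found by solving `a·p ≡ m (mod q)`, while two elements never sum to
`c - 1 = pq - p - q` because `(a + 1)p + (b + 1)q ≠ pq`. So exactly half of `[0, c)` are gaps. -/

/-- The `ℂ`-subspace `S = ℂ⟦t^p, t^q⟧` of `ℂ⟦t⟧`: series whose coefficient at `t^m`
vanishes for every `m` not of the form `a·p + b·q` with `a, b ∈ ℕ`. It is the local ring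
of the curve `x^p = y^q`, with normalization `ℂ⟦t⟧`. -/
noncomputable def semigroupRingSub (p q : ℕ) : Submodule ℂ (PowerSeries ℂ) where
  carrier := {f | ∀ m : ℕ, (¬ ∃ a b : ℕ, m = a * p + b * q) → PowerSeries.coeff (R := ℂ) m f = 0}
  add_mem' := by
    intro f g hf hg m hm
    simp [map_add, hf m hm, hg m hm]
  zero_mem' := by
    intro m hm
    simp
  smul_mem' := by
    intro c f hf m hm
    simp [hf m hm]

namespace PowerSeries

variable {R : Type*} [CommRing R] (s : Finset ℕ)

noncomputable def coeffOn : R⟦X⟧ →ₗ[R] (s → R) :=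
  LinearMap.pi fun m => coeff m.1

theorem mem_ker_coeffOn {f : R⟦X⟧} :
    f ∈ LinearMap.ker (coeffOn s) ↔ ∀ m ∈ s, coeff m f = 0 := by
  simp [coeffOn, funext_iff]

open Classical in
theorem coeffOn_surjective : Function.Surjective (coeffOn (R := R) s) := fun g =>
  ⟨mk fun n => if h : n ∈ s then g ⟨n, h⟩ else 0, funext fun m => by simp [coeffOn]⟩

noncomputable def quotKerCoeffOnEquiv :
    (R⟦X⟧ ⧸ LinearMap.ker (coeffOn (R := R) s)) ≃ₗ[R] (s → R) :=
  LinearMap.quotKerEquivOfSurjective _ (coeffOn_surjective s)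

end PowerSeries

open Finset in
theorem two_mul_card_filter_range_of_reflect_iff_not {P : ℕ → Prop} [DecidablePred P] {c : ℕ}
    (h : ∀ m < c, P (c - 1 - m) ↔ ¬ P m) : 2 * #{m ∈ range c | P m} = c := by
  have hsum : ∀ m ∈ range c, ((if P m then 1 else 0) + if P (c - 1 - m) then 1 else 0) = 1 := by
    intro m hm
    by_cases hPm : P m <;> simp [hPm, h m (mem_range.mp hm)]
  calc 2 * #{m ∈ range c | P m}
      = ∑ m ∈ range c, (if P m then 1 else 0) + ∑ m ∈ range c, if P (c - 1 - m) then 1 else 0 := by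
        rw [card_filter, sum_range_reflect (fun m => if P m then 1 else 0) c, two_mul]
    _ = c := by
        rw [← sum_add_distrib, sum_congr rfl hsum, sum_const, card_range, smul_eq_mul, mul_one]

namespace Nat.Coprime

variable {p q : ℕ}

theorem exists_add_add_one_eq_of_not_exists (hpq : p.Coprime q) (hp : 0 < p) (hq : 0 < q)
    {m : ℕ} (hm : ¬ ∃ a b : ℕ, m = a * p + b * q) :
    ∃ a b : ℕ, m + (a * p + b * q) + 1 = (p - 1) * (q - 1) := by
  obtain ⟨a, haq, hmod⟩ : ∃ a < q, a * p ≡ m [MOD q] := by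
    have : NeZero q := ⟨hq.ne'⟩
    refine ⟨((m : ZMod q) * (p : ZMod q)⁻¹).val, ZMod.val_lt _, ?_⟩
    rw [← ZMod.natCast_eq_natCast_iff]
    push_cast
    rw [ZMod.natCast_zmod_val, mul_assoc,
      ZMod.inv_mul_of_unit _ ((ZMod.isUnit_iff_coprime p q).mpr hpq), mul_one]
  have hlt : m < a * p := by
    by_contra! hle
    obtain ⟨b, hb⟩ := (Nat.modEq_iff_dvd' hle).mp hmod
    exact hm ⟨a, b, by rw [mul_comm b q]; omega⟩
  obtain ⟨k, hk⟩ := (Nat.modEq_iff_dvd' hlt.le).mp hmod.symm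
  -- `a * p = m + k * q` with `k ≥ 1`; the complement of `m` is `(q - 1 - a) * p + (k - 1) * q`.
  obtain ⟨c, rfl⟩ : ∃ c, q = a + c + 1 := ⟨q - 1 - a, by omega⟩
  obtain ⟨d, rfl⟩ : ∃ d, k = d + 1 := ⟨k - 1, by rcases k with _ | k <;> simp_all; omega⟩
  obtain ⟨p, rfl⟩ : ∃ p', p = p' + 1 := ⟨p - 1, by omega⟩
  refine ⟨c, d, ?_⟩
  have : a * (p + 1) = m + (a + c + 1) * (d + 1) := by omega
  simp only [Nat.add_sub_cancel]
  nlinarith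

theorem add_add_one_ne_of_exists (hpq : p.Coprime q) (hp : 0 < p) (hq : 0 < q) {m n : ℕ}
    (hm : ∃ a b : ℕ, m = a * p + b * q) (hn : ∃ a b : ℕ, n = a * p + b * q) :
    m + n + 1 ≠ (p - 1) * (q - 1) := by
  obtain ⟨a, b, rfl⟩ := hm
  obtain ⟨a', b', rfl⟩ := hn
  intro h
  apply hpq.mul_add_mul_ne_mul (a := a + a' + 1) (b := b + b' + 1) (by omega) (by omega)
  obtain ⟨p, rfl⟩ : ∃ p', p = p' + 1 := ⟨p - 1, by omega⟩
  obtain ⟨q, rfl⟩ : ∃ q', q = q' + 1 := ⟨q - 1, by omega⟩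
  simp only [Nat.add_sub_cancel] at h
  nlinarith

end Nat.Coprime

open Classical in
noncomputable def semigroupGaps (p q : ℕ) : Finset ℕ :=
  {m ∈ Finset.range ((p - 1) * (q - 1)) | ¬ ∃ a b : ℕ, m = a * p + b * q}

section semigroupGaps

variable {p q : ℕ}

theorem mem_semigroupGaps (hpq : p.Coprime q) (hp : 0 < p) (hq : 0 < q) {m : ℕ} :
    m ∈ semigroupGaps p q ↔ ¬ ∃ a b : ℕ, m = a * p + b * q := by
  classical
  rw [semigroupGaps, Finset.mem_filter, Finset.mem_range, and_iff_right_iff_imp]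
  intro hm
  obtain ⟨a, b, h⟩ := hpq.exists_add_add_one_eq_of_not_exists hp hq hm
  omega

theorem two_mul_card_semigroupGaps (hpq : p.Coprime q) (hp : 0 < p) (hq : 0 < q) :
    2 * (semigroupGaps p q).card = (p - 1) * (q - 1) := by
  classical
  refine two_mul_card_filter_range_of_reflect_iff_not fun m hm => ⟨fun hgap' hgap => ?_, ?_⟩
  · obtain ⟨a, b, h⟩ := hpq.exists_add_add_one_eq_of_not_exists hp hq hgap
    exact hgap' ⟨a, b, by omega⟩
  · intro hmem hmem'
    exact hpq.add_add_one_ne_of_exists hp hq (not_not.mp hmem) hmem' (by omega)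

theorem semigroupRingSub_eq_ker_coeffOn (hpq : p.Coprime q) (hp : 0 < p) (hq : 0 < q) :
    semigroupRingSub p q = LinearMap.ker (PowerSeries.coeffOn (R := ℂ) (semigroupGaps p q)) := by
  ext f
  rw [PowerSeries.mem_ker_coeffOn]
  simp only [mem_semigroupGaps hpq hp hq]
  rfl

end semigroupGaps

/-- The δ-invariant of the plane curve singularity `x^p − y^q = 0` equals
`(p−1)(q−1)/2` (Example 4.7 combined with Theorem 4.12, formal version):
`ℂ⟦t⟧/ℂ⟦t^p, t^q⟧` is a finite-dimensional `ℂ`-vector space with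
`2 · dim_ℂ (ℂ⟦t⟧/S) = (p−1)·(q−1)`. -/
theorem delta_xp_yq (p q : ℕ) (hp : 0 < p) (hq : 0 < q) (hpq : Nat.Coprime p q) :
    FiniteDimensional ℂ (PowerSeries ℂ ⧸ semigroupRingSub p q) ∧
    2 * Module.finrank ℂ (PowerSeries ℂ ⧸ semigroupRingSub p q) = (p - 1) * (q - 1) := by
  let e := (Submodule.quotEquivOfEq _ _ (semigroupRingSub_eq_ker_coeffOn hpq hp hq)).trans
    (PowerSeries.quotKerCoeffOnEquiv (semigroupGaps p q))
  refine ⟨Module.Finite.equiv e.symm, ?_⟩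
  rw [e.finrank_eq, Module.finrank_fintype_fun_eq_card, Fintype.card_coe,
    two_mul_card_semigroupGaps hpq hp hq]
end

section
/- Let w₀, w₁, w₂ be pairwise coprime positive integers, let d be a natural number, and let F ∈ ℂ[X₀,X₁,X₂] be weighted homogeneous of degree d with respect to the weights (w₀,w₁,w₂). If F does not vanish at any of the three standard basis vectors e₀ = (1,0,0), e₁ = (0,1,0), e₂ = (0,0,1) of ℂ³ (equivalently, the curve {F = 0} ⊂ ℙ²_w does not pass through any of the three vertices of the weighted projective plane), then w₀·w₁·w₂ divides d. -/
/-- The 'only if' direction of Lemma 5.4: if `F ∈ ℂ[X₀,X₁,X₂]` is weighted homogeneous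
of degree `d` with respect to pairwise coprime positive weights `(w₀,w₁,w₂)` and does not
vanish at any of the three standard basis vectors of `ℂ³` (i.e. the curve `{F = 0} ⊂ ℙ²_w`
misses the three vertices), then `w₀·w₁·w₂ ∣ d`. -/
theorem weights_dvd_degree_of_not_through_vertices (w : Fin 3 → ℕ) (hw : ∀ i, 0 < w i)
    (h01 : Nat.Coprime (w 0) (w 1)) (h02 : Nat.Coprime (w 0) (w 2))
    (h12 : Nat.Coprime (w 1) (w 2)) (d : ℕ) (F : MvPolynomial (Fin 3) ℂ)
    (hF : F.IsWeightedHomogeneous w d)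
    (hvert : ∀ i : Fin 3, MvPolynomial.eval (Pi.single i (1 : ℂ)) F ≠ 0) :
    w 0 * w 1 * w 2 ∣ d := by
  have key : ∀ i, w i ∣ d := by
    intro i
    have h := hvert i
    rw [MvPolynomial.eval_eq] at h
    obtain ⟨α, hα, hne⟩ := Finset.exists_ne_zero_of_sum_ne_zero h
    have hcoeff : F.coeff α ≠ 0 := fun h0 => hne (by simp [h0])
    have hprod : ∀ j, j ≠ i → α j = 0 := by
      intro j hj
      by_contra hαj
      apply hne
      have hz : (Pi.single i (1 : ℂ) : Fin 3 → ℂ) j ^ α j = (0 : ℂ) := by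
        rw [Pi.single_eq_of_ne hj]
        exact zero_pow hαj
      rw [Finset.prod_eq_zero (Finsupp.mem_support_iff.mpr hαj) hz, mul_zero]
    have hdeg := hF hcoeff
    rw [← hdeg]
    have : (Finsupp.weight w) α = α i * w i := by
      rw [Finsupp.weight_apply]
      rw [Finsupp.sum]
      rcases Finset.eq_empty_or_nonempty α.support with he | _
      · have : α i = 0 := by
          by_contra hne'
          exact (Finset.notMem_empty i) (he ▸ Finsupp.mem_support_iff.mpr hne')
        simp [he, this]
      · have hsub : α.support ⊆ {i} := by
          intro j hj
          rw [Finset.mem_singleton]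
          by_contra hji
          exact Finsupp.mem_support_iff.mp hj (hprod j hji)
        rw [Finset.sum_subset hsub (fun j _ hj => by
          simp [Finsupp.notMem_support_iff.mp hj])]
        simp [smul_eq_mul]
    rw [this]
    exact dvd_mul_left (w i) (α i)
  exact (Nat.Coprime.mul h02 h12).mul_dvd_of_dvd_of_dvd
    (h01.mul_dvd_of_dvd_of_dvd (key 0) (key 1)) (key 2)
end

section
/- Let w₀, w₁, w₂ be positive integers, and let d be a positive integer divisible by each wᵢ. Set F = X₀^{d/w₀} + X₁^{d/w₁} + X₂^{d/w₂} ∈ ℂ[X₀,X₁,X₂]. Then: (1) F is weighted homogeneous of degree d with respect to (w₀,w₁,w₂); (2) F does not vanish at any of the three standard basis vectors of ℂ³; and (3) the three partial derivatives ∂F/∂X₀, ∂F/∂X₁, ∂F/∂X₂ have no common zero in ℂ³ ∖ {0}. Consequently F defines a smooth curve of degree d in ℙ²_w transversal with respect to the axes, proving the 'if' direction of the existence criterion. -/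
open MvPolynomial

private lemma iwh_pow {σ : Type*} (w : σ → ℕ) (i : σ) (n : ℕ) :
    (X i ^ n : MvPolynomial σ ℂ).IsWeightedHomogeneous w (n * w i) := by
  induction n with
  | zero => simpa using isWeightedHomogeneous_one (R := ℂ) w
  | succ n ih =>
    have := ih.mul (isWeightedHomogeneous_X ℂ w i)
    rw [pow_succ]
    convert this using 1
    ring

/-- The 'if' direction of Lemma 5.4: if each `wᵢ` divides `d`, then
`F = X₀^{d/w₀} + X₁^{d/w₁} + X₂^{d/w₂}` is weighted homogeneous of degree `d` w.r.t.
`(w₀,w₁,w₂)`, does not vanish at any standard basis vector of `ℂ³`, and its three partial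
derivatives have no common zero in `ℂ³ ∖ {0}`; hence it defines a smooth curve of degree
`d` in `ℙ²_w` transversal with respect to the axes. -/
theorem fermat_curve_smooth_transversal (w : Fin 3 → ℕ) (hw : ∀ i, 0 < w i)
    (d : ℕ) (hd : 0 < d) (hdvd : ∀ i, w i ∣ d)
    (F : MvPolynomial (Fin 3) ℂ)
    (hF : F = MvPolynomial.X 0 ^ (d / w 0) + MvPolynomial.X 1 ^ (d / w 1) +
      MvPolynomial.X 2 ^ (d / w 2)) :
    F.IsWeightedHomogeneous w d ∧
    (∀ i : Fin 3, MvPolynomial.eval (Pi.single i (1 : ℂ)) F ≠ 0) ∧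
    (∀ x : Fin 3 → ℂ, x ≠ 0 → ∃ i : Fin 3,
      MvPolynomial.eval x (MvPolynomial.pderiv i F) ≠ 0) := by
  have hdw : ∀ i : Fin 3, d / w i * w i = d := fun i => Nat.div_mul_cancel (hdvd i)
  have hpos : ∀ i : Fin 3, 0 < d / w i := fun i =>
    Nat.div_pos (Nat.le_of_dvd hd (hdvd i)) (hw i)
  subst hF
  refine ⟨?_, ?_, ?_⟩
  · have h0 := iwh_pow w (0 : Fin 3) (d / w 0)
    have h1 := iwh_pow w (1 : Fin 3) (d / w 1)
    have h2 := iwh_pow w (2 : Fin 3) (d / w 2)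
    rw [hdw 0] at h0; rw [hdw 1] at h1; rw [hdw 2] at h2
    exact (h0.add h1).add h2
  · intro i
    have heval : ∀ j : Fin 3, (Pi.single i (1:ℂ) : Fin 3 → ℂ) j ^ (d / w j) = if j = i then (1:ℂ) else 0 := by
      intro j
      by_cases h : j = i
      · subst h; simp
      · rw [Pi.single_eq_of_ne h, if_neg h, zero_pow (hpos j).ne']
    simp only [map_add, map_pow, eval_X]
    rw [heval 0, heval 1, heval 2]
    fin_cases i <;> norm_num [Fin.ext_iff]
  · intro x hx
    obtain ⟨i, hi⟩ : ∃ i, x i ≠ 0 := by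
      by_contra h
      push_neg at h
      exact hx (funext h)
    refine ⟨i, ?_⟩
    have hderiv : ∀ j : Fin 3, pderiv i (X j ^ (d / w j) : MvPolynomial (Fin 3) ℂ) =
        if j = i then ((d / w j : ℕ) : MvPolynomial (Fin 3) ℂ) * X j ^ (d / w j - 1) else 0 := by
      intro j
      rw [pderiv_pow, pderiv_X]
      by_cases h : j = i
      · subst h; simp [Pi.single_eq_same]
      · simp [Pi.single_eq_of_ne h, if_neg h]
    simp only [map_add, hderiv]
    fin_cases i <;>
      simp_all [mul_ne_zero, pow_ne_zero, Nat.cast_ne_zero, (hpos _).ne'] <;>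
      exact ⟨hd.ne', (hw _).ne'⟩
end

section
/- Let d, a, b be positive integers with gcd(d, a, b) = 1. Set s = gcd(d,a) and r = gcd(d,b); then r and s are coprime and r·s divides d. Let μ_d act on ℂ² by ξ·(x,y) = (ξ^a x, ξ^b y), and let μ_{d/(rs)} act on ℂ² by η·(u,v) = (η^{a/s} u, η^{b/r} v). Then the map ℂ² → ℂ², (x,y) ↦ (x^r, y^s), sends μ_d-orbits into μ_{d/(rs)}-orbits, and the induced map on orbit spaces X(d; a, b) → X(d/(rs); a/s, b/r) is a well-defined bijection. -/
/-- The orbit equivalence on `ℂ²` for the action `ξ·(x,y) = (ξ^a x, ξ^b y)` of the `d`-th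
roots of unity; `Quot (cycRel d a b)` is the cyclic quotient space `X(d; a, b)`. -/
def cycRel (d a b : ℕ) (u v : ℂ × ℂ) : Prop :=
  ∃ ξ : ℂ, ξ ^ d = 1 ∧ v.1 = ξ ^ a * u.1 ∧ v.2 = ξ ^ b * u.2

private lemma crt_aux (r s a b k l : ℤ) (hrs : IsCoprime r s) (har : IsCoprime a r)
    (hbs : IsCoprime b s) : ∃ e, r ∣ a * e - k ∧ s ∣ b * e - l := by
  obtain ⟨u, v, huv⟩ := har
  obtain ⟨u', v', huv'⟩ := hbs
  obtain ⟨p, q, hpq⟩ := hrs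
  refine ⟨u * k * (q * s) + u' * l * (p * r), ⟨-(k*p) - v*k*(1 - p*r) + a*u'*l*p, ?_⟩,
    ⟨-(l*q) - v'*l*(1 - q*s) + b*u*k*q, ?_⟩⟩
  · linear_combination (k*q*s)*huv + (k - v*r*k)*hpq
  · linear_combination (l*p*r)*huv' + (l - v'*s*l)*hpq

private lemma zpow_eq_of_dvd {ζ : ℂ} {d : ℕ} (hd : 0 < d) (hζ : ζ ^ d = 1) {m n : ℤ}
    (h : (d : ℤ) ∣ m - n) : ζ ^ m = ζ ^ n := by
  have hζ0 : ζ ≠ 0 := by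
    intro h0; rw [h0, zero_pow hd.ne'] at hζ; exact zero_ne_one hζ
  obtain ⟨c, hc⟩ := h
  have hm : m = n + (d : ℤ) * c := by linarith
  rw [hm, zpow_add₀ hζ0, zpow_mul, zpow_natCast, hζ, one_zpow, mul_one]

private lemma cycRel_equivalence (d a b : ℕ) (hd : 0 < d) : Equivalence (cycRel d a b) := by
  constructor
  · intro x; exact ⟨1, one_pow d, by simp, by simp⟩
  · rintro x y ⟨ξ, h1, h2, h3⟩
    have hξ : ξ ≠ 0 := by
      intro h0; rw [h0, zero_pow hd.ne'] at h1; exact zero_ne_one h1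
    refine ⟨ξ⁻¹, by rw [inv_pow, h1, inv_one], ?_, ?_⟩
    · rw [h2, inv_pow, ← mul_assoc, inv_mul_cancel₀ (pow_ne_zero a hξ), one_mul]
    · rw [h3, inv_pow, ← mul_assoc, inv_mul_cancel₀ (pow_ne_zero b hξ), one_mul]
  · rintro x y z ⟨ξ, h1, h2, h3⟩ ⟨ζ, g1, g2, g3⟩
    exact ⟨ζ * ξ, by rw [mul_pow, h1, g1, one_mul],
      by rw [g2, h2, mul_pow]; ring, by rw [g3, h3, mul_pow]; ring⟩
private lemma key (d a b : ℕ) (hd : 0 < d) (ha : 0 < a) (hb : 0 < b)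
    (hrs : Nat.Coprime (Nat.gcd d b) (Nat.gcd d a))
    (hdvd : Nat.gcd d b * Nat.gcd d a ∣ d) (η α β : ℂ)
    (hη : η ^ (d / (Nat.gcd d b * Nat.gcd d a)) = 1)
    (hα : α ^ Nat.gcd d b = η ^ (a / Nat.gcd d a))
    (hβ : β ^ Nat.gcd d a = η ^ (b / Nat.gcd d b)) :
    ∃ ξ : ℂ, ξ ^ d = 1 ∧ ξ ^ a = α ∧ ξ ^ b = β := by
  set s := Nat.gcd d a with hs
  set r := Nat.gcd d b with hr
  set D := d / (r * s) with hDdef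
  have rpos : 0 < r := Nat.gcd_pos_of_pos_left b hd
  have spos : 0 < s := Nat.gcd_pos_of_pos_left a hd
  have hD : r * s * D = d := Nat.mul_div_cancel' hdvd
  have Dpos : 0 < D := Nat.div_pos (Nat.le_of_dvd hd hdvd) (Nat.mul_pos rpos spos)
  set a' := a / s with ha'
  set b' := b / r with hb'
  have hsa : s * a' = a := Nat.mul_div_cancel' (Nat.gcd_dvd_right d a)
  have hrb : r * b' = b := Nat.mul_div_cancel' (Nat.gcd_dvd_right d b)
  haveI : NeZero d := ⟨hd.ne'⟩
  have hω := Complex.isPrimitiveRoot_exp d hd.ne'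
  set ω := Complex.exp (2 * Real.pi * Complex.I / d) with hωdef
  have hω0 : ω ≠ 0 := hω.ne_zero hd.ne'
  have hωd : ω ^ d = 1 := hω.pow_eq_one
  -- η, α, β are d-th roots of unity
  have hηd : η ^ d = 1 := by
    rw [show d = D * (r * s) by rw [← hD]; ring, pow_mul, hη, one_pow]
  have hαd : α ^ d = 1 := by
    rw [show d = r * (s * D) by rw [← hD]; ring, pow_mul, hα, ← pow_mul,
      show a' * (s * D) = D * (s * a') by ring, pow_mul, hη, one_pow]
  have hβd : β ^ d = 1 := by
    rw [show d = s * (r * D) by rw [← hD]; ring, pow_mul, hβ, ← pow_mul,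
      show b' * (r * D) = D * (r * b') by ring, pow_mul, hη, one_pow]
  obtain ⟨m, -, hm⟩ := hω.eq_pow_of_pow_eq_one hηd
  obtain ⟨p, -, hp⟩ := hω.eq_pow_of_pow_eq_one hαd
  obtain ⟨q, -, hq⟩ := hω.eq_pow_of_pow_eq_one hβd
  -- from η^D = 1 : r*s ∣ m
  have hm1 : d ∣ m * D := by
    rw [← hω.pow_eq_one_iff_dvd, pow_mul, hm, hη]
  have hrsm : r * s ∣ m := by
    have : r * s * D ∣ m * D := by rw [hD]; exact hm1
    exact (Nat.mul_dvd_mul_iff_right Dpos).mp this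
  obtain ⟨m', hm'⟩ := hrsm
  have hsaz : (s : ℤ) * a' = a := by exact_mod_cast hsa
  have hrbz : (r : ℤ) * b' = b := by exact_mod_cast hrb
  have hdz1 : (d : ℤ) = (r : ℤ) * ((s : ℤ) * D) := by rw [← hD]; push_cast; ring
  have hdz2 : (d : ℤ) = (s : ℤ) * ((r : ℤ) * D) := by rw [← hD]; push_cast; ring
  have hr0 : (r : ℤ) ≠ 0 := by exact_mod_cast rpos.ne'
  have hs0 : (s : ℤ) ≠ 0 := by exact_mod_cast spos.ne'
  -- congruence for α
  have hpr : ω ^ (p * r) = ω ^ (m * a') := by rw [pow_mul, hp, hα, ← hm, ← pow_mul]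
  have hdvd1 : (d : ℤ) ∣ ((p * r : ℕ) : ℤ) - ((m * a' : ℕ) : ℤ) := by
    rw [← hω.zpow_eq_one_iff_dvd, zpow_sub₀ hω0, zpow_natCast, zpow_natCast, hpr,
      ]
    exact div_self (pow_ne_zero _ hω0)
  have he1 : ((p * r : ℕ) : ℤ) - ((m * a' : ℕ) : ℤ) = (r : ℤ) * ((p : ℤ) - a * m') := by
    push_cast [hm']
    linear_combination (-(r : ℤ) * m') * hsaz
  rw [he1, hdz1] at hdvd1
  obtain ⟨k, hk⟩ := (mul_dvd_mul_iff_left hr0).mp hdvd1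
  -- congruence for β
  have hqs : ω ^ (q * s) = ω ^ (m * b') := by rw [pow_mul, hq, hβ, ← hm, ← pow_mul]
  have hdvd2 : (d : ℤ) ∣ ((q * s : ℕ) : ℤ) - ((m * b' : ℕ) : ℤ) := by
    rw [← hω.zpow_eq_one_iff_dvd, zpow_sub₀ hω0, zpow_natCast, zpow_natCast, hqs,
      ]
    exact div_self (pow_ne_zero _ hω0)
  have he2 : ((q * s : ℕ) : ℤ) - ((m * b' : ℕ) : ℤ) = (s : ℤ) * ((q : ℤ) - b * m') := by
    push_cast [hm']
    linear_combination (-(s : ℤ) * m') * hrbz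
  rw [he2, hdz2] at hdvd2
  obtain ⟨l, hl⟩ := (mul_dvd_mul_iff_left hs0).mp hdvd2
  -- coprimality
  have hds : d / s = r * D := by
    rw [show d = s * (r * D) by rw [← hD]; ring, Nat.mul_div_cancel_left _ spos]
  have hdr : d / r = s * D := by
    rw [show d = r * (s * D) by rw [← hD]; ring, Nat.mul_div_cancel_left _ rpos]
  have hca' : Nat.Coprime a' r := by
    have h1 : Nat.Coprime (d / s) (a / s) := Nat.coprime_div_gcd_div_gcd spos
    exact Nat.Coprime.coprime_dvd_right ⟨D, hds⟩ h1.symm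
  have hcb' : Nat.Coprime b' s := by
    have h1 : Nat.Coprime (d / r) (b / r) := Nat.coprime_div_gcd_div_gcd rpos
    exact Nat.Coprime.coprime_dvd_right ⟨D, hdr⟩ h1.symm
  -- CRT
  obtain ⟨e, ⟨c1, hc1⟩, ⟨c2, hc2⟩⟩ := crt_aux (r : ℤ) (s : ℤ) (a' : ℤ) (b' : ℤ) k l
    hrs.isCoprime hca'.isCoprime hcb'.isCoprime
  refine ⟨ω ^ ((m' : ℤ) + D * e), ?_, ?_, ?_⟩
  · rw [← zpow_natCast (ω ^ ((m' : ℤ) + D * e)), ← zpow_mul]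
    rw [hω.zpow_eq_one_iff_dvd]
    exact dvd_mul_left _ _
  · rw [← hp, ← zpow_natCast (ω ^ ((m' : ℤ) + D * e)), ← zpow_mul, ← zpow_natCast ω p]
    apply zpow_eq_of_dvd hd hωd
    refine ⟨c1, ?_⟩
    rw [hdz1]
    linear_combination (-1 : ℤ) * hk + ((D : ℤ) * s) * hc1 - ((D : ℤ) * e) * hsaz
  · rw [← hq, ← zpow_natCast (ω ^ ((m' : ℤ) + D * e)), ← zpow_mul, ← zpow_natCast ω q]
    apply zpow_eq_of_dvd hd hωd
    refine ⟨c2, ?_⟩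
    rw [hdz2]
    linear_combination (-1 : ℤ) * hl + ((D : ℤ) * r) * hc2 - ((D : ℤ) * e) * hrbz

/-- Example 2.7 (normalization of a quotient-singularity type): let `d, a, b` be positive
with `gcd(d,a,b) = 1`, and set `s = gcd(d,a)`, `r = gcd(d,b)`. Then `r` and `s` are coprime,
`r·s ∣ d`, the map `(x,y) ↦ (x^r, y^s)` sends `μ_d`-orbits into `μ_{d/(rs)}`-orbits (for the
weights `(a/s, b/r)`), and the induced map `X(d; a, b) → X(d/(rs); a/s, b/r)` is a
well-defined bijection. -/
theorem normalization_of_quotient_type (d a b : ℕ) (hd : 0 < d) (ha : 0 < a) (hb : 0 < b)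
    (hgcd : Nat.gcd d (Nat.gcd a b) = 1) :
    Nat.Coprime (Nat.gcd d b) (Nat.gcd d a) ∧
    Nat.gcd d b * Nat.gcd d a ∣ d ∧
    (∀ u v : ℂ × ℂ, cycRel d a b u v →
      cycRel (d / (Nat.gcd d b * Nat.gcd d a)) (a / Nat.gcd d a) (b / Nat.gcd d b)
        (u.1 ^ Nat.gcd d b, u.2 ^ Nat.gcd d a) (v.1 ^ Nat.gcd d b, v.2 ^ Nat.gcd d a)) ∧
    ∃ Φ : Quot (cycRel d a b) →
        Quot (cycRel (d / (Nat.gcd d b * Nat.gcd d a)) (a / Nat.gcd d a) (b / Nat.gcd d b)),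
      (∀ u : ℂ × ℂ, Φ (Quot.mk _ u) = Quot.mk _ (u.1 ^ Nat.gcd d b, u.2 ^ Nat.gcd d a)) ∧
      Function.Bijective Φ := by
  set s := Nat.gcd d a with hs
  set r := Nat.gcd d b with hr
  have hrs : Nat.Coprime r s := by
    have h1 : Nat.gcd r s ∣ d := (Nat.gcd_dvd_left r s).trans (Nat.gcd_dvd_left d b)
    have h2 : Nat.gcd r s ∣ a := (Nat.gcd_dvd_right r s).trans (Nat.gcd_dvd_right d a)
    have h3 : Nat.gcd r s ∣ b := (Nat.gcd_dvd_left r s).trans (Nat.gcd_dvd_right d b)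
    have h4 : Nat.gcd r s ∣ Nat.gcd d (Nat.gcd a b) := Nat.dvd_gcd h1 (Nat.dvd_gcd h2 h3)
    rw [hgcd] at h4
    exact Nat.dvd_one.mp h4
  have hdvd : r * s ∣ d :=
    Nat.Coprime.mul_dvd_of_dvd_of_dvd hrs (Nat.gcd_dvd_left d b) (Nat.gcd_dvd_left d a)
  have rpos : 0 < r := Nat.gcd_pos_of_pos_left b hd
  have spos : 0 < s := Nat.gcd_pos_of_pos_left a hd
  have Dpos : 0 < d / (r * s) := Nat.div_pos (Nat.le_of_dvd hd hdvd) (Nat.mul_pos rpos spos)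
  have hsa : s * (a / s) = a := Nat.mul_div_cancel' (Nat.gcd_dvd_right d a)
  have hrb : r * (b / r) = b := Nat.mul_div_cancel' (Nat.gcd_dvd_right d b)
  have part3 : ∀ u v : ℂ × ℂ, cycRel d a b u v →
      cycRel (d / (r * s)) (a / s) (b / r) (u.1 ^ r, u.2 ^ s) (v.1 ^ r, v.2 ^ s) := by
    rintro u v ⟨ξ, hξ, h1, h2⟩
    refine ⟨ξ ^ (r * s), ?_, ?_, ?_⟩
    · rw [← pow_mul, Nat.mul_div_cancel' hdvd, hξ]
    · show v.1 ^ r = (ξ ^ (r * s)) ^ (a / s) * u.1 ^ r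
      rw [h1, mul_pow, ← pow_mul, ← pow_mul,
        show r * s * (a / s) = a * r by rw [mul_assoc, hsa]; ring]
    · show v.2 ^ s = (ξ ^ (r * s)) ^ (b / r) * u.2 ^ s
      rw [h2, mul_pow, ← pow_mul, ← pow_mul,
        show r * s * (b / r) = b * s by rw [mul_comm r s, mul_assoc, hrb]; ring]
  refine ⟨hrs, hdvd, part3, Quot.lift (fun u => Quot.mk _ (u.1 ^ r, u.2 ^ s))
    (fun u v h => Quot.sound (part3 u v h)), fun u => rfl, ?_, ?_⟩
  · -- injective
    intro q1 q2
    induction q1 using Quot.ind with | _ u => ?_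
    induction q2 using Quot.ind with | _ v => ?_
    intro h
    have heq : cycRel (d / (r * s)) (a / s) (b / r) (u.1 ^ r, u.2 ^ s) (v.1 ^ r, v.2 ^ s) :=
      (Equivalence.eqvGen_iff (cycRel_equivalence _ _ _ Dpos)).mp (Quot.eq.mp h)
    obtain ⟨η, hη, h1, h2⟩ := heq
    dsimp only at h1 h2
    have hA : ∃ α : ℂ, α ^ r = η ^ (a / s) ∧ v.1 = α * u.1 := by
      by_cases hu : u.1 = 0
      · obtain ⟨α, hα⟩ := IsAlgClosed.exists_pow_nat_eq (η ^ (a / s)) rpos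
        have hv : v.1 = 0 := by
          have hz : v.1 ^ r = 0 := by rw [h1, hu, zero_pow rpos.ne', mul_zero]
          exact (pow_eq_zero_iff rpos.ne').mp hz
        exact ⟨α, hα, by rw [hv, hu, mul_zero]⟩
      · refine ⟨v.1 / u.1, ?_, by field_simp⟩
        rw [div_pow, h1]
        exact mul_div_cancel_right₀ _ (pow_ne_zero r hu)
    have hB : ∃ β : ℂ, β ^ s = η ^ (b / r) ∧ v.2 = β * u.2 := by
      by_cases hu : u.2 = 0
      · obtain ⟨β, hβ⟩ := IsAlgClosed.exists_pow_nat_eq (η ^ (b / r)) spos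
        have hv : v.2 = 0 := by
          have hz : v.2 ^ s = 0 := by rw [h2, hu, zero_pow spos.ne', mul_zero]
          exact (pow_eq_zero_iff spos.ne').mp hz
        exact ⟨β, hβ, by rw [hv, hu, mul_zero]⟩
      · refine ⟨v.2 / u.2, ?_, by field_simp⟩
        rw [div_pow, h2]
        exact mul_div_cancel_right₀ _ (pow_ne_zero s hu)
    obtain ⟨α, hα, hvα⟩ := hA
    obtain ⟨β, hβ, hvβ⟩ := hB
    obtain ⟨ξ, k1, k2, k3⟩ := key d a b hd ha hb hrs hdvd η α β hη hα hβ
    exact Quot.sound ⟨ξ, k1, by rw [hvα, k2], by rw [hvβ, k3]⟩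
  · -- surjective
    intro q
    induction q using Quot.ind with | _ w => ?_
    obtain ⟨x, hx⟩ := IsAlgClosed.exists_pow_nat_eq (k := ℂ) w.1 rpos
    obtain ⟨y, hy⟩ := IsAlgClosed.exists_pow_nat_eq (k := ℂ) w.2 spos
    refine ⟨Quot.mk _ (x, y), ?_⟩
    show Quot.mk _ (x ^ r, y ^ s) = Quot.mk _ w
    rw [hx, hy]
end
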